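/- arXiv:1710.10605 — 3 statements merged into one kernel-verified Lean document; each statement's English description precedes it below -/
import Mathlib

section
/- (Proposition 2, case D≥3, existence) Let D ≥ 3 and let R'^{ikjp} be a smooth tensor field on ℝ^D having Riemann symmetries and satisfying ∂_k∂_p R'^{ikjp} = 0 for all i,j. Then there exists a smooth tensor field ξ^{ikjpr} on ℝ^D, antisymmetric in the pair [ik] and totally antisymmetric in the last three indices [jpr] (ξ^{ikjpr}=ξ^{[ik][jpr]}), such that R'^{ikjp} = ∂_r ( (1/2)ξ^{ikjpr} + (1/2)ξ^{jpikr} − ξ^{[ikjpr]} ) (sum over r). -/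
/-!
The potential `ξ` is built from the radial homotopy operator `S_q f (x) = ∫₀¹ t^q f (t x) dt`,
which satisfies `∂_m S_q f = S_{q+1} ∂_m f` and the Euler identity
`(q+1) S_q f + x^m S_{q+1} ∂_m f = f`.
For antisymmetric `T^{ab}`, the cyclic sum
`K(T)^{abc} = x^a S_q T^{bc} + x^b S_q T^{ca} + x^c S_q T^{ab}` then satisfies
`∂_c K(T)^{abc} = T^{ab} + x^a S_{q+1} ∂_c T^{bc} - x^b S_{q+1} ∂_c T^{ac}` when `q = D - 3`.
Applied to `T = R^{ik··}` this recovers `R^{ikjp}` up to terms in `G^{abc} = ∂_m R^{abcm}`.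
As `G` is antisymmetric in `ab` with `∂_b G^{abc} = 0`, the same operator applied to `G^{··c}`
gives the correction `x^k S_q K(G^{··i})^{jpr} - x^i S_q K(G^{··k})^{jpr}`. After symmetrizing under
`ik ↔ jp` the `G`-terms cancel, and what remains vanishes by `G^{abc} = G^{acb} - G^{bca}`, a
consequence of the symmetries of `R`. Finally `ξ^{[ikjpr]} = 0`: the first part of `ξ` consists of
terms `x^a S_q R^{bcde}`, killed by the Bianchi identity, and the correction has two factors of `x`.
-/

/-- Partial derivative in the k-th Cartesian coordinate direction on ℝ^D. -/
noncomputable def pd {D : ℕ} (k : Fin D) (f : (Fin D → ℝ) → ℝ) : (Fin D → ℝ) → ℝ :=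
  fun x => fderiv ℝ f x (Pi.single k 1)

/-- Total antisymmetrization ξ^{[ikjpr]} of a 5-index tensor field, with 1/5!
normalization. -/
noncomputable def alt5 {D : ℕ}
    (ξ : Fin D → Fin D → Fin D → Fin D → Fin D → (Fin D → ℝ) → ℝ)
    (i k j p r : Fin D) : (Fin D → ℝ) → ℝ :=
  fun x => (1 / 120 : ℝ) * ∑ σ : Equiv.Perm (Fin 5),
    ((Equiv.Perm.sign σ : ℤ) : ℝ) *
      ξ (![i,k,j,p,r] (σ 0)) (![i,k,j,p,r] (σ 1)) (![i,k,j,p,r] (σ 2))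
        (![i,k,j,p,r] (σ 3)) (![i,k,j,p,r] (σ 4)) x

namespace DivFreeRiemann

section RadialIntegral

variable {E F : Type*} [NormedAddCommGroup E] [NormedSpace ℝ E]
  [NormedAddCommGroup F] [NormedSpace ℝ F]

noncomputable def radialInt (q : ℕ) (f : E → F) (x : E) : F :=
  ∫ t in (0 : ℝ)..1, t ^ q • f (t • x)

theorem intervalIntegrable_radialIntegrand {f : E → F} (hf : Continuous f) (q : ℕ) (x : E) :
    IntervalIntegrable (fun t : ℝ => t ^ q • f (t • x)) MeasureTheory.volume 0 1 :=
  (by fun_prop : Continuous fun t : ℝ => t ^ q • f (t • x)).intervalIntegrable _ _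

theorem continuous_radialInt {f : E → F} (hf : Continuous f) (q : ℕ) :
    Continuous (radialInt q f) :=
  intervalIntegral.continuous_parametric_intervalIntegral_of_continuous' (by fun_prop) 0 1

theorem radialInt_add {f g : E → F} (hf : Continuous f) (hg : Continuous g) (q : ℕ) (x : E) :
    radialInt q (fun y => f y + g y) x = radialInt q f x + radialInt q g x := by
  simp only [radialInt, smul_add]
  exact intervalIntegral.integral_add (intervalIntegrable_radialIntegrand hf q x)
    (intervalIntegrable_radialIntegrand hg q x)

theorem radialInt_sub {f g : E → F} (hf : Continuous f) (hg : Continuous g) (q : ℕ) (x : E) :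
    radialInt q (fun y => f y - g y) x = radialInt q f x - radialInt q g x := by
  simp only [radialInt, smul_sub]
  exact intervalIntegral.integral_sub (intervalIntegrable_radialIntegrand hf q x)
    (intervalIntegrable_radialIntegrand hg q x)

theorem radialInt_neg (f : E → F) (q : ℕ) (x : E) :
    radialInt q (fun y => -f y) x = -radialInt q f x := by
  simp only [radialInt, smul_neg, intervalIntegral.integral_neg]

theorem radialInt_congr_neg {f g : E → F} (h : ∀ y, f y = -g y) (q : ℕ) (x : E) :
    radialInt q f x = -radialInt q g x := by
  rw [← radialInt_neg]
  exact congrArg (radialInt q · x) (funext h)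

theorem radialInt_sum {ι : Type*} (s : Finset ι) {f : ι → E → F} (hf : ∀ i, Continuous (f i))
    (q : ℕ) (x : E) :
    radialInt q (fun y => ∑ i ∈ s, f i y) x = ∑ i ∈ s, radialInt q (f i) x := by
  simp only [radialInt, Finset.smul_sum]
  exact intervalIntegral.integral_finsetSum fun i _ => intervalIntegrable_radialIntegrand (hf i) q x

theorem radialInt_zero (q : ℕ) (x : E) : radialInt q (fun _ : E => (0 : F)) x = 0 := by
  simp [radialInt]

theorem radialInt_const_smul (c : ℝ) (f : E → F) (q : ℕ) (x : E) :
    radialInt q (fun y => c • f y) x = c • radialInt q f x := by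
  simp only [radialInt, smul_comm _ c, intervalIntegral.integral_smul]

theorem radialInt_linear_smul (ℓ : E →ₗ[ℝ] ℝ) (f : E → F) (q : ℕ) (x : E) :
    radialInt q (fun y => ℓ y • f y) x = ℓ x • radialInt (q + 1) f x := by
  simp only [radialInt, ← intervalIntegral.integral_smul, map_smul, smul_smul, pow_succ]
  congr 1; ext t; ring_nf

theorem radialInt_euler [CompleteSpace F] {f : E → F} (hf : ContDiff ℝ 1 f) (q : ℕ) (x : E) :
    ((q : ℝ) + 1) • radialInt q f x + radialInt (q + 1) (fun z => fderiv ℝ f z x) x = f x := by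
  have hderiv : ∀ t ∈ Set.uIcc (0 : ℝ) 1, HasDerivAt (fun s : ℝ => s ^ (q + 1) • f (s • x))
      ((((q : ℝ) + 1) * t ^ q) • f (t • x) + t ^ (q + 1) • fderiv ℝ f (t • x) x) t := by
    intro t _
    have h1 : HasDerivAt (fun s : ℝ => s ^ (q + 1)) (((q : ℝ) + 1) * t ^ q) t := by
      simpa using hasDerivAt_pow (q + 1) t
    have h2 : HasDerivAt (fun s : ℝ => f (s • x)) (fderiv ℝ f (t • x) x) t :=
      (hf.differentiable one_ne_zero (t • x)).hasFDerivAt.comp_hasDerivAt t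
        (by simpa using (hasDerivAt_id t).smul_const x)
    exact h1.smul h2 |>.congr_deriv (add_comm _ _)
  have := hf.continuous
  have := hf.continuous_fderiv one_ne_zero
  have hA : Continuous fun t : ℝ => (((q : ℝ) + 1) * t ^ q) • f (t • x) := by fun_prop
  have hB : Continuous fun t : ℝ => t ^ (q + 1) • fderiv ℝ f (t • x) x := by fun_prop
  have hftc := intervalIntegral.integral_eq_sub_of_hasDerivAt hderiv
    ((hA.add hB).intervalIntegrable _ _)
  rw [intervalIntegral.integral_add (hA.intervalIntegrable _ _) (hB.intervalIntegrable _ _)]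
    at hftc
  simpa [radialInt, mul_smul, intervalIntegral.integral_smul] using hftc

variable [FiniteDimensional ℝ E]

theorem hasFDerivAt_radialInt {f : E → F} (hf : ContDiff ℝ 1 f) (q : ℕ) (x₀ : E) :
    HasFDerivAt (radialInt q f) (∫ t in (0 : ℝ)..1, t ^ (q + 1) • fderiv ℝ f (t • x₀)) x₀ := by
  have hf' : Continuous (fderiv ℝ f) := hf.continuous_fderiv one_ne_zero
  obtain ⟨C, hC⟩ : ∃ C, ∀ y ∈ (fun p : ℝ × E => p.1 • p.2) ''
      (Set.Icc 0 1 ×ˢ Metric.closedBall x₀ 1), ‖fderiv ℝ f y‖ ≤ C :=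
    ((isCompact_Icc.prod (isCompact_closedBall x₀ 1)).image continuous_smul)
      |>.exists_bound_of_continuousOn hf'.continuousOn
  have hbound : ∀ t ∈ Set.uIoc (0 : ℝ) 1, ∀ x ∈ Metric.ball x₀ 1,
      ‖t ^ (q + 1) • fderiv ℝ f (t • x)‖ ≤ C := by
    intro t ht x hx
    rw [Set.uIoc_of_le zero_le_one] at ht
    calc ‖t ^ (q + 1) • fderiv ℝ f (t • x)‖ ≤ ‖fderiv ℝ f (t • x)‖ := by
          rw [norm_smul, norm_pow, Real.norm_of_nonneg ht.1.le]
          exact mul_le_of_le_one_left (norm_nonneg _) (pow_le_one₀ ht.1.le ht.2)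
      _ ≤ C := hC _ ⟨(t, x), ⟨⟨ht.1.le, ht.2⟩, Metric.ball_subset_closedBall hx⟩, rfl⟩
  have hderiv : ∀ (t : ℝ) (x : E),
      HasFDerivAt (fun x => t ^ q • f (t • x)) (t ^ (q + 1) • fderiv ℝ f (t • x)) x := by
    intro t x
    refine (((hf.differentiable one_ne_zero (t • x)).hasFDerivAt.comp x
      ((hasFDerivAt_id x).const_smul t)).const_smul (t ^ q)).congr_fderiv ?_
    ext v
    simp [smul_smul, pow_succ]
  exact intervalIntegral.hasFDerivAt_integral_of_dominated_of_fderiv_le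
    (Metric.ball_mem_nhds x₀ one_pos)
    (Filter.Eventually.of_forall fun x =>
      (by fun_prop : Continuous fun t : ℝ => t ^ q • f (t • x)).aestronglyMeasurable)
    (intervalIntegrable_radialIntegrand hf.continuous q x₀)
    (by fun_prop : Continuous fun t : ℝ => t ^ (q + 1) • fderiv ℝ f (t • x₀)).aestronglyMeasurable
    (MeasureTheory.ae_of_all _ hbound) intervalIntegrable_const
    (MeasureTheory.ae_of_all _ fun t _ x _ => hderiv t x)

theorem fderiv_radialInt_apply [CompleteSpace F] {f : E → F} (hf : ContDiff ℝ 1 f) (q : ℕ)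
    (x y : E) :
    fderiv ℝ (radialInt q f) x y = radialInt (q + 1) (fun z => fderiv ℝ f z y) x := by
  rw [(hasFDerivAt_radialInt hf q x).fderiv, ContinuousLinearMap.intervalIntegral_apply
    ((by fun_prop : Continuous fun t : ℝ => t ^ (q + 1) • fderiv ℝ f (t • x)).intervalIntegrable
      _ _)]
  rfl

theorem contDiff_radialInt [CompleteSpace F] {n : ℕ∞} {f : E → F} (hf : ContDiff ℝ n f) (q : ℕ) :
    ContDiff ℝ n (radialInt q f) := by
  suffices h : ∀ m : ℕ, ∀ (f : E → F) (q : ℕ), ContDiff ℝ m f → ContDiff ℝ m (radialInt q f) by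
    induction n with
    | top => exact contDiff_infty.2 fun m => h m f q (hf.of_le (by exact_mod_cast le_top))
    | coe m => exact h m f q hf
  intro m
  induction m with
  | zero =>
    intro f q hf
    exact contDiff_zero.2 (continuous_radialInt (contDiff_zero.1 hf) q)
  | succ m ih =>
    intro f q hf
    have hf1 : ContDiff ℝ 1 f := hf.of_le (by exact_mod_cast Nat.le_add_left 1 m)
    rw [Nat.cast_add, Nat.cast_one] at hf ⊢
    refine contDiff_succ_iff_fderiv_apply.2
      ⟨fun x => (hasFDerivAt_radialInt hf1 q x).differentiableAt, by simp, fun y => ?_⟩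
    simp_rw [fderiv_radialInt_apply hf1]
    exact ih _ (q + 1) ((contDiff_succ_iff_fderiv_apply.1 hf).2.2 y)

end RadialIntegral

section Alternation

variable {ι : Type*} {n : ℕ}

noncomputable def altSum (g : (Fin n → ι) → ℝ) (v : Fin n → ι) : ℝ :=
  ∑ σ : Equiv.Perm (Fin n), ((Equiv.Perm.sign σ : ℤ) : ℝ) * g (v ∘ σ)

theorem altSum_comp_perm (g : (Fin n → ι) → ℝ) (ρ : Equiv.Perm (Fin n)) (v : Fin n → ι) :
    altSum (fun w => g (w ∘ ρ)) v = ((Equiv.Perm.sign ρ : ℤ) : ℝ) * altSum g v := by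
  have hρ : ((Equiv.Perm.sign ρ : ℤ) : ℝ) * ((Equiv.Perm.sign ρ : ℤ) : ℝ) = 1 := by
    rw [← Int.cast_mul, ← Units.val_mul, Int.units_mul_self, Units.val_one, Int.cast_one]
  conv_rhs => rw [altSum, ← Equiv.sum_comp (Equiv.mulRight ρ), Finset.mul_sum]
  refine Finset.sum_congr rfl fun σ _ => ?_
  simp only [Equiv.coe_mulRight, Equiv.Perm.sign_mul, Units.val_mul, Int.cast_mul,
    Equiv.Perm.coe_mul, Function.comp_assoc]
  linear_combination (-((Equiv.Perm.sign σ : ℤ) : ℝ) * g (v ∘ σ ∘ ρ)) * hρ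

theorem altSum_add (g h : (Fin n → ι) → ℝ) (v : Fin n → ι) :
    altSum (fun w => g w + h w) v = altSum g v + altSum h v := by
  simp only [altSum, mul_add, Finset.sum_add_distrib]

theorem altSum_sub (g h : (Fin n → ι) → ℝ) (v : Fin n → ι) :
    altSum (fun w => g w - h w) v = altSum g v - altSum h v := by
  simp only [altSum, mul_sub, Finset.sum_sub_distrib]

theorem altSum_eq_zero_of_swap {g : (Fin n → ι) → ℝ} {s t : Fin n} (hst : s ≠ t)
    (hg : ∀ w, g (w ∘ Equiv.swap s t) = g w) (v : Fin n → ι) : altSum g v = 0 := by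
  have h := altSum_comp_perm g (Equiv.swap s t) v
  simp only [hg, Equiv.Perm.sign_swap hst, Units.val_neg, Units.val_one, Int.cast_neg,
    Int.cast_one] at h
  linarith

theorem altSum_eq_zero_of_cycle {g : (Fin n → ι) → ℝ} {ρ : Equiv.Perm (Fin n)}
    (hρ : Equiv.Perm.sign ρ = 1) (hg : ∀ w, g w + g (w ∘ ρ) + g (w ∘ ρ ∘ ρ) = 0)
    (v : Fin n → ι) : altSum g v = 0 := by
  have h1 := altSum_comp_perm g ρ v
  have h2 := altSum_comp_perm (fun w => g (w ∘ ρ)) ρ v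
  have h0 : altSum (fun w => g w + g (w ∘ ρ) + g (w ∘ ρ ∘ ρ)) v = 0 := by
    simp only [hg, altSum, mul_zero, Finset.sum_const_zero]
  rw [altSum_add, altSum_add] at h0
  simp only [hρ, Units.val_one, Int.cast_one, one_mul] at h1 h2
  change altSum (fun w => g (w ∘ ρ ∘ ρ)) v = _ at h2
  linarith

theorem altSum_coord_mul_bianchi (x : ι → ℝ) (r : ι → ι → ι → ι → ℝ)
    (hr : ∀ a b c d, r a b c d + r a c d b + r a d b c = 0) (v : Fin 5 → ι) :
    altSum (fun w => x (w 2) * r (w 0) (w 1) (w 3) (w 4) + x (w 3) * r (w 0) (w 1) (w 4) (w 2)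
      + x (w 4) * r (w 0) (w 1) (w 2) (w 3)) v = 0 := by
  rw [altSum_add, altSum_add, altSum_eq_zero_of_cycle (ρ := c[1, 3, 4]) (by decide) (fun w => ?_),
    altSum_eq_zero_of_cycle (ρ := c[1, 4, 2]) (by decide) (fun w => ?_),
    altSum_eq_zero_of_cycle (ρ := c[1, 2, 3]) (by decide) (fun w => ?_)]
  · norm_num
  · show x (w 4) * r (w 0) (w 1) (w 2) (w 3) + x (w 4) * r (w 0) (w 2) (w 3) (w 1)
      + x (w 4) * r (w 0) (w 3) (w 1) (w 2) = 0
    linear_combination x (w 4) * hr (w 0) (w 1) (w 2) (w 3)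
  · show x (w 3) * r (w 0) (w 1) (w 4) (w 2) + x (w 3) * r (w 0) (w 4) (w 2) (w 1)
      + x (w 3) * r (w 0) (w 2) (w 1) (w 4) = 0
    linear_combination x (w 3) * hr (w 0) (w 1) (w 4) (w 2)
  · show x (w 2) * r (w 0) (w 1) (w 3) (w 4) + x (w 2) * r (w 0) (w 3) (w 4) (w 1)
      + x (w 2) * r (w 0) (w 4) (w 1) (w 3) = 0
    linear_combination x (w 2) * hr (w 0) (w 1) (w 3) (w 4)

theorem altSum_coord_mul_coord (x : ι → ℝ) (h : ι → ι → ι → ℝ) (v : Fin 5 → ι) :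
    altSum (fun w => x (w 1) * (x (w 2) * h (w 3) (w 4) (w 0) + x (w 3) * h (w 4) (w 2) (w 0)
      + x (w 4) * h (w 2) (w 3) (w 0))) v = 0 := by
  simp only [mul_add]
  rw [altSum_add, altSum_add, altSum_eq_zero_of_swap (s := 1) (t := 2) (by decide) (fun w => ?_),
    altSum_eq_zero_of_swap (s := 1) (t := 3) (by decide) (fun w => ?_),
    altSum_eq_zero_of_swap (s := 1) (t := 4) (by decide) (fun w => ?_)]
  · norm_num
  all_goals
    simp only [Function.comp_apply, Equiv.swap_apply_left, Equiv.swap_apply_right,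
      Equiv.swap_apply_of_ne_of_ne, ne_eq, Fin.reduceEq, not_false_eq_true, zero_ne_one]
    ring

end Alternation

section Coordinates

variable {D : ℕ}

noncomputable def divergence (V : Fin D → (Fin D → ℝ) → ℝ) (x : Fin D → ℝ) : ℝ :=
  ∑ m, pd m (V m) x

theorem continuous_pd {f : (Fin D → ℝ) → ℝ} (hf : ContDiff ℝ 1 f) (m : Fin D) :
    Continuous (pd m f) :=
  (hf.continuous_fderiv one_ne_zero).clm_apply continuous_const

theorem contDiff_pd {f : (Fin D → ℝ) → ℝ} (hf : ContDiff ℝ (⊤ : ℕ∞) f) (m : Fin D) :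
    ContDiff ℝ (⊤ : ℕ∞) (pd m f) :=
  (hf.fderiv_right (m := (⊤ : ℕ∞)) (by simp)).clm_apply contDiff_const

theorem contDiff_divergence {V : Fin D → (Fin D → ℝ) → ℝ} (hV : ∀ m, ContDiff ℝ (⊤ : ℕ∞) (V m)) :
    ContDiff ℝ (⊤ : ℕ∞) (divergence V) :=
  ContDiff.sum fun m _ => contDiff_pd (hV m) m

theorem fderiv_apply_eq_sum_pd (f : (Fin D → ℝ) → ℝ) (y v : Fin D → ℝ) :
    fderiv ℝ f y v = ∑ m, v m * pd m f y := by
  conv_lhs => rw [pi_eq_sum_univ v]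
  simp only [map_sum, map_smul, smul_eq_mul, pd]
  congr! 3 with m
  ext j
  simp [Pi.single_apply, eq_comm]

theorem pd_radialInt {f : (Fin D → ℝ) → ℝ} (hf : ContDiff ℝ 1 f) (q : ℕ) (m : Fin D) :
    pd m (radialInt q f) = radialInt (q + 1) (pd m f) :=
  funext fun x => fderiv_radialInt_apply hf q x _

theorem radialInt_euler_pd {f : (Fin D → ℝ) → ℝ} (hf : ContDiff ℝ 1 f) (q : ℕ) (x : Fin D → ℝ) :
    ((q : ℝ) + 1) * radialInt q f x + ∑ m, x m * radialInt (q + 1) (pd m f) x = f x := by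
  have h := radialInt_euler hf q x
  simp only [fderiv_apply_eq_sum_pd f, smul_eq_mul] at h
  rw [radialInt_sum _ (f := fun m z => x m * pd m f z)
    (fun m => continuous_const.mul (continuous_pd hf m))] at h
  have hc : ∀ m, radialInt (q + 1) (fun z => x m * pd m f z) x
      = x m * radialInt (q + 1) (pd m f) x :=
    fun m => radialInt_const_smul (x m) (pd m f) (q + 1) x
  simpa only [hc] using h

theorem pd_add {f g : (Fin D → ℝ) → ℝ} {x : Fin D → ℝ} (hf : DifferentiableAt ℝ f x)
    (hg : DifferentiableAt ℝ g x) (m : Fin D) :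
    pd m (fun y => f y + g y) x = pd m f x + pd m g x := by
  simp [pd, fderiv_fun_add hf hg]

theorem pd_sub {f g : (Fin D → ℝ) → ℝ} {x : Fin D → ℝ} (hf : DifferentiableAt ℝ f x)
    (hg : DifferentiableAt ℝ g x) (m : Fin D) :
    pd m (fun y => f y - g y) x = pd m f x - pd m g x := by
  simp [pd, fderiv_fun_sub hf hg]

theorem pd_neg (f : (Fin D → ℝ) → ℝ) (m : Fin D) (x : Fin D → ℝ) :
    pd m (fun y => -f y) x = -pd m f x := by
  simp [pd]

theorem pd_const_mul {f : (Fin D → ℝ) → ℝ} {x : Fin D → ℝ} (hf : DifferentiableAt ℝ f x)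
    (c : ℝ) (m : Fin D) : pd m (fun y => c * f y) x = c * pd m f x := by
  simp [pd, fderiv_const_mul hf c]

theorem pd_sum {ι : Type*} (s : Finset ι) {f : ι → (Fin D → ℝ) → ℝ} {x : Fin D → ℝ}
    (hf : ∀ i ∈ s, DifferentiableAt ℝ (f i) x) (m : Fin D) :
    pd m (fun y => ∑ i ∈ s, f i y) x = ∑ i ∈ s, pd m (f i) x := by
  simp [pd, fderiv_fun_sum hf]

theorem pd_coord_mul {f : (Fin D → ℝ) → ℝ} {x : Fin D → ℝ} (hf : DifferentiableAt ℝ f x)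
    (a m : Fin D) :
    pd m (fun y => y a * f y) x = x a * pd m f x + if a = m then f x else 0 := by
  have ha : HasFDerivAt (fun y : Fin D → ℝ => y a) (ContinuousLinearMap.proj a) x :=
    (ContinuousLinearMap.proj (R := ℝ) (φ := fun _ : Fin D => ℝ) a).hasFDerivAt
  rw [pd, fderiv_fun_mul ha.differentiableAt hf, ha.fderiv]
  simp [pd, Pi.single_apply, add_comm]

theorem divergence_add {V W : Fin D → (Fin D → ℝ) → ℝ} {x : Fin D → ℝ}
    (hV : ∀ m, DifferentiableAt ℝ (V m) x) (hW : ∀ m, DifferentiableAt ℝ (W m) x) :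
    divergence (fun m y => V m y + W m y) x = divergence V x + divergence W x := by
  simp only [divergence, pd_add (hV _) (hW _), Finset.sum_add_distrib]

theorem divergence_sub {V W : Fin D → (Fin D → ℝ) → ℝ} {x : Fin D → ℝ}
    (hV : ∀ m, DifferentiableAt ℝ (V m) x) (hW : ∀ m, DifferentiableAt ℝ (W m) x) :
    divergence (fun m y => V m y - W m y) x = divergence V x - divergence W x := by
  simp only [divergence, pd_sub (hV _) (hW _), Finset.sum_sub_distrib]

theorem divergence_neg (V : Fin D → (Fin D → ℝ) → ℝ) (x : Fin D → ℝ) :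
    divergence (fun m y => -V m y) x = -divergence V x := by
  simp only [divergence, pd_neg, Finset.sum_neg_distrib]

theorem divergence_const_mul {V : Fin D → (Fin D → ℝ) → ℝ} {x : Fin D → ℝ}
    (hV : ∀ m, DifferentiableAt ℝ (V m) x) (c : ℝ) :
    divergence (fun m y => c * V m y) x = c * divergence V x := by
  simp only [divergence, pd_const_mul (hV _), Finset.mul_sum]

theorem pd_coord_mul_radialInt {f : (Fin D → ℝ) → ℝ} (hf : ContDiff ℝ 1 f) (q : ℕ)
    (a m : Fin D) (x : Fin D → ℝ) :
    pd m (fun y => y a * radialInt q f y) x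
      = x a * radialInt (q + 1) (pd m f) x + if a = m then radialInt q f x else 0 := by
  rw [pd_coord_mul ((hasFDerivAt_radialInt hf q x).differentiableAt), pd_radialInt hf]

theorem divergence_coord_mul_radialInt {F : Fin D → (Fin D → ℝ) → ℝ}
    (hF : ∀ m, ContDiff ℝ 1 (F m)) (q : ℕ) (a : Fin D) (x : Fin D → ℝ) :
    divergence (fun m y => y a * radialInt q (F m) y) x
      = x a * radialInt (q + 1) (divergence F) x + radialInt q (F a) x := by
  simp only [divergence, pd_coord_mul_radialInt (hF _), Finset.sum_add_distrib,
    Finset.sum_ite_eq, Finset.mem_univ, if_true, ← Finset.mul_sum]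
  rw [← radialInt_sum _ fun m => continuous_pd (hF m) m]
  rfl

theorem divergence_coord_self_mul_radialInt {f : (Fin D → ℝ) → ℝ} (hf : ContDiff ℝ 1 f)
    (q : ℕ) (x : Fin D → ℝ) :
    divergence (fun m y => y m * radialInt q f y) x
      = ((D : ℝ) - q - 1) * radialInt q f x + f x := by
  have h := radialInt_euler_pd hf q x
  simp only [divergence, pd_coord_mul_radialInt hf, if_pos, Finset.sum_add_distrib,
    Finset.sum_const, Finset.card_univ, Fintype.card_fin, nsmul_eq_mul]
  linarith

end Coordinates

section DivPotential

variable {D : ℕ}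

noncomputable def divPotential (q : ℕ) (T : Fin D → Fin D → (Fin D → ℝ) → ℝ) (a b c : Fin D)
    (x : Fin D → ℝ) : ℝ :=
  x a * radialInt q (T b c) x + x b * radialInt q (T c a) x + x c * radialInt q (T a b) x

variable {q : ℕ} {T : Fin D → Fin D → (Fin D → ℝ) → ℝ}

theorem divPotential_cycle (a b c : Fin D) (x : Fin D → ℝ) :
    divPotential q T b c a x = divPotential q T a b c x := by
  simp only [divPotential]; ring

theorem divPotential_swap (hT : ∀ a b x, T a b x = -T b a x) (a b c : Fin D) (x : Fin D → ℝ) :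
    divPotential q T b a c x = -divPotential q T a b c x := by
  simp only [divPotential, radialInt_congr_neg (hT a c), radialInt_congr_neg (hT c b),
    radialInt_congr_neg (hT b a)]
  ring

theorem divPotential_swap_right (hT : ∀ a b x, T a b x = -T b a x) (a b c : Fin D)
    (x : Fin D → ℝ) : divPotential q T a c b x = -divPotential q T a b c x := by
  rw [divPotential_cycle b a c, divPotential_swap hT]

theorem contDiff_coord_mul_radialInt {f : (Fin D → ℝ) → ℝ} (hf : ContDiff ℝ (⊤ : ℕ∞) f)
    (a : Fin D) : ContDiff ℝ (⊤ : ℕ∞) fun y => y a * radialInt q f y :=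
  (contDiff_apply ℝ ℝ a).mul (contDiff_radialInt hf q)

theorem contDiff_divPotential (hT : ∀ a b, ContDiff ℝ (⊤ : ℕ∞) (T a b)) (a b c : Fin D) :
    ContDiff ℝ (⊤ : ℕ∞) (divPotential q T a b c) :=
  ((contDiff_coord_mul_radialInt (hT b c) a).add (contDiff_coord_mul_radialInt (hT c a) b)).add
    (contDiff_coord_mul_radialInt (hT a b) c)

theorem divergence_divPotential (hq : D = q + 3) (hT : ∀ a b, ContDiff ℝ (⊤ : ℕ∞) (T a b))
    (hTanti : ∀ a b x, T a b x = -T b a x) (a b : Fin D) (x : Fin D → ℝ) :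
    divergence (divPotential q T a b) x = T a b x + x a * radialInt (q + 1) (divergence (T b)) x
      - x b * radialInt (q + 1) (divergence (T a)) x := by
  have hT1 : ∀ a b, ContDiff ℝ 1 (T a b) := fun a b => (hT a b).of_le (by simp)
  have hd : ∀ u c d, DifferentiableAt ℝ (fun y => y u * radialInt q (T c d) y) x :=
    fun u c d => (contDiff_coord_mul_radialInt (hT c d) u).differentiable (by simp) x
  have hdivT : divergence (fun c => T c a) = fun y => -divergence (T a) y := by
    funext y
    rw [← divergence_neg]
    exact congrArg (divergence · y) (funext fun c => funext (hTanti c a))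
  -- `(D - q - 1) S_q T^{ab}` from the term `x^c S_q T^{ab}` must cancel the `-S_q T^{ab}`
  -- contributed by each of the two other terms
  have hD : (D : ℝ) - q - 1 = 2 := by rw [hq]; push_cast; ring
  change divergence (fun c y => y a * radialInt q (T b c) y + y b * radialInt q (T c a) y
    + y c * radialInt q (T a b) y) x = _
  rw [divergence_add (fun c => (hd a b c).fun_add (hd b c a)) (fun c => hd c a b),
    divergence_add (fun c => hd a b c) (fun c => hd b c a),
    divergence_coord_mul_radialInt (fun c => hT1 b c),
    divergence_coord_mul_radialInt (fun c => hT1 c a) q b,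
    divergence_coord_self_mul_radialInt (hT1 a b), hdivT, radialInt_neg, hD,
    radialInt_congr_neg (hTanti b a)]
  ring

theorem radialInt_divPotential (hT : ∀ a b, Continuous (T a b)) (q' : ℕ) (a b c : Fin D)
    (x : Fin D → ℝ) :
    radialInt q' (divPotential q T a b c) x
      = x a * radialInt (q' + 1) (radialInt q (T b c)) x
        + x b * radialInt (q' + 1) (radialInt q (T c a)) x
        + x c * radialInt (q' + 1) (radialInt q (T a b)) x := by
  have hc : ∀ u d e, Continuous fun y : Fin D → ℝ => y u * radialInt q (T d e) y :=
    fun u d e => (continuous_apply u).mul (continuous_radialInt (hT d e) q)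
  have hpull : ∀ u d e, radialInt q' (fun y => y u * radialInt q (T d e) y) x
      = x u * radialInt (q' + 1) (radialInt q (T d e)) x :=
    fun u d e => radialInt_linear_smul (LinearMap.proj u) _ q' x
  change radialInt q' (fun y => y a * radialInt q (T b c) y + y b * radialInt q (T c a) y
    + y c * radialInt q (T a b) y) x = _
  rw [radialInt_add ((hc a b c).fun_add (hc b c a)) (hc c a b), radialInt_add (hc a b c) (hc b c a),
    hpull, hpull, hpull]

end DivPotential

section RiemannPotential

variable {D : ℕ}

structure HasRiemannSymmetries (R : Fin D → Fin D → Fin D → Fin D → (Fin D → ℝ) → ℝ) : Prop where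
  antisymm_left : ∀ i k j p x, R i k j p x = -R k i j p x
  antisymm_right : ∀ i k j p x, R i k j p x = -R i k p j x
  pair_symm : ∀ i k j p x, R i k j p x = R j p i k x
  cyclic : ∀ i k j p x, R i k j p x + R i j p k x + R i p k j x = 0

noncomputable def riemannPotential (q : ℕ) (R : Fin D → Fin D → Fin D → Fin D → (Fin D → ℝ) → ℝ)
    (i k j p r : Fin D) (x : Fin D → ℝ) : ℝ :=
  divPotential q (R i k) j p r x
    + x k * radialInt q (divPotential q (fun a b => divergence (R a b i)) j p r) x
    - x i * radialInt q (divPotential q (fun a b => divergence (R a b k)) j p r) x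

variable {q : ℕ} {R : Fin D → Fin D → Fin D → Fin D → (Fin D → ℝ) → ℝ}

namespace HasRiemannSymmetries

variable (hR : HasRiemannSymmetries R)
include hR

theorem divergence_antisymm (a b c : Fin D) (x : Fin D → ℝ) :
    divergence (R a b c) x = -divergence (R b a c) x := by
  rw [← divergence_neg]
  exact congrArg (divergence · x) (funext fun m => funext (hR.antisymm_left a b c m))

theorem divergence_cyclic (hsmooth : ∀ i k j p, ContDiff ℝ (⊤ : ℕ∞) (R i k j p)) (a b c : Fin D)
    (x : Fin D → ℝ) :
    divergence (R a b c) x = divergence (R a c b) x - divergence (R b c a) x := by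
  have hd : ∀ i k j p, DifferentiableAt ℝ (R i k j p) x :=
    fun i k j p => (hsmooth i k j p).differentiable (by simp) x
  rw [← divergence_sub (hd a c b) (hd b c a)]
  refine congrArg (divergence · x) (funext fun m => funext fun y => ?_)
  linarith [hR.cyclic a b c m y, hR.antisymm_right a c b m y, hR.pair_symm a m b c y]

theorem riemannPotential_antisymm_left (i k j p r : Fin D) (x : Fin D → ℝ) :
    riemannPotential q R i k j p r x = -riemannPotential q R k i j p r x := by
  have h : divPotential q (R i k) j p r x = -divPotential q (R k i) j p r x := by
    simp only [divPotential, radialInt_congr_neg (hR.antisymm_left i k p r),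
      radialInt_congr_neg (hR.antisymm_left i k r j),
      radialInt_congr_neg (hR.antisymm_left i k j p)]
    ring
  simp only [riemannPotential, h]
  ring

theorem riemannPotential_antisymm_mid (i k j p r : Fin D) (x : Fin D → ℝ) :
    riemannPotential q R i k j p r x = -riemannPotential q R i k p j r x := by
  have hV : ∀ c, radialInt q (divPotential q (fun a b => divergence (R a b c)) j p r) x
      = -radialInt q (divPotential q (fun a b => divergence (R a b c)) p j r) x := fun c =>
    radialInt_congr_neg (divPotential_swap (fun a b => hR.divergence_antisymm a b c) p j r) q x
  simp only [riemannPotential, divPotential_swap (hR.antisymm_right i k) p j r, hV]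
  ring

theorem riemannPotential_antisymm_right (i k j p r : Fin D) (x : Fin D → ℝ) :
    riemannPotential q R i k j p r x = -riemannPotential q R i k j r p x := by
  have hV : ∀ c, radialInt q (divPotential q (fun a b => divergence (R a b c)) j p r) x
      = -radialInt q (divPotential q (fun a b => divergence (R a b c)) j r p) x := fun c =>
    radialInt_congr_neg
      (divPotential_swap_right (fun a b => hR.divergence_antisymm a b c) j r p) q x
  simp only [riemannPotential, divPotential_swap_right (hR.antisymm_right i k) j r p, hV]
  ring

end HasRiemannSymmetries

section Potential

variable (hsmooth : ∀ i k j p, ContDiff ℝ (⊤ : ℕ∞) (R i k j p))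
include hsmooth

theorem divergence_divergence_eq_zero
    (hdiv : ∀ i j x, ∑ k, ∑ p, pd k (pd p (R i k j p)) x = 0) (a c : Fin D) :
    divergence (fun e => divergence (R a e c)) = fun _ => 0 := by
  funext x
  rw [← hdiv a c x]
  exact Finset.sum_congr rfl fun e _ => pd_sum _
    (fun m _ => (contDiff_pd (hsmooth a e c m) m).differentiable (by simp) x) e

theorem contDiff_riemannPotential (i k j p r : Fin D) :
    ContDiff ℝ (⊤ : ℕ∞) (riemannPotential q R i k j p r) := by
  have hG : ∀ i, ContDiff ℝ (⊤ : ℕ∞) (divPotential q (fun a b => divergence (R a b i)) j p r) :=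
    fun i => contDiff_divPotential (fun a b => contDiff_divergence (hsmooth a b i)) j p r
  exact ((contDiff_divPotential (hsmooth i k) j p r).add
    (contDiff_coord_mul_radialInt (hG i) k)).sub (contDiff_coord_mul_radialInt (hG k) i)

theorem divergence_riemannPotential (hq : D = q + 3) (hR : HasRiemannSymmetries R)
    (hdiv : ∀ i j x, ∑ k, ∑ p, pd k (pd p (R i k j p)) x = 0) (i k j p : Fin D)
    (x : Fin D → ℝ) :
    divergence (riemannPotential q R i k j p) x = R i k j p x
      + x j * radialInt (q + 1) (divergence (R i k p)) x
      - x p * radialInt (q + 1) (divergence (R i k j)) x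
      + x k * radialInt (q + 1) (divergence (R j p i)) x
      - x i * radialInt (q + 1) (divergence (R j p k)) x
      + radialInt q (divPotential q (fun a b => divergence (R a b i)) j p k) x
      - radialInt q (divPotential q (fun a b => divergence (R a b k)) j p i) x := by
  have hG : ∀ a b c, ContDiff ℝ (⊤ : ℕ∞) (divergence (R a b c)) :=
    fun a b c => contDiff_divergence (hsmooth a b c)
  have hV : ∀ c r, ContDiff ℝ (⊤ : ℕ∞) (divPotential q (fun a b => divergence (R a b c)) j p r) :=
    fun c => contDiff_divPotential (fun a b => hG a b c) j p
  have hdivV : ∀ c, divergence (divPotential q (fun a b => divergence (R a b c)) j p)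
      = divergence (R j p c) := by
    intro c
    funext y
    rw [divergence_divPotential hq (fun a b => hG a b c) (fun a b => hR.divergence_antisymm a b c),
      divergence_divergence_eq_zero hsmooth hdiv, divergence_divergence_eq_zero hsmooth hdiv,
      radialInt_zero]
    ring
  have hd : ∀ u c r, DifferentiableAt ℝ
      (fun y => y u * radialInt q (divPotential q (fun a b => divergence (R a b c)) j p r) y) x :=
    fun u c r => (contDiff_coord_mul_radialInt (hV c r) u).differentiable (by simp) x
  have hK : ∀ r, DifferentiableAt ℝ (divPotential q (R i k) j p r) x :=
    fun r => (contDiff_divPotential (hsmooth i k) j p r).differentiable (by simp) x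
  change divergence (fun r y => divPotential q (R i k) j p r y
    + y k * radialInt q (divPotential q (fun a b => divergence (R a b i)) j p r) y
    - y i * radialInt q (divPotential q (fun a b => divergence (R a b k)) j p r) y) x = _
  rw [divergence_sub (fun r => (hK r).fun_add (hd k i r)) (hd i k), divergence_add hK (hd k i),
    divergence_divPotential hq (hsmooth i k) (hR.antisymm_right i k),
    divergence_coord_mul_radialInt (fun r => (hV i r).of_le (by simp)),
    divergence_coord_mul_radialInt (fun r => (hV k r).of_le (by simp)), hdivV, hdivV]
  ring

theorem correction_terms_cancel (hR : HasRiemannSymmetries R) (i k j p : Fin D) (x : Fin D → ℝ) :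
    radialInt q (divPotential q (fun a b => divergence (R a b i)) j p k) x
      - radialInt q (divPotential q (fun a b => divergence (R a b k)) j p i) x
      + radialInt q (divPotential q (fun a b => divergence (R a b j)) i k p) x
      - radialInt q (divPotential q (fun a b => divergence (R a b p)) i k j) x = 0 := by
  have hG : ∀ a b c, Continuous (divergence (R a b c)) :=
    fun a b c => (contDiff_divergence (hsmooth a b c)).continuous
  have hSG : ∀ a b c, Continuous (radialInt q (divergence (R a b c))) :=
    fun a b c => continuous_radialInt (hG a b c) q
  set g := fun a b c => radialInt (q + 1) (radialInt q (divergence (R a b c))) x with hg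
  have ha : ∀ a b c, g a b c = -g b a c := fun a b c =>
    radialInt_congr_neg (radialInt_congr_neg (hR.divergence_antisymm a b c) q) (q + 1) x
  have hc : ∀ a b c, g a b c = g a c b - g b c a := by
    intro a b c
    simp only [hg]
    rw [← radialInt_sub (hSG a c b) (hSG b c a)]
    refine congrArg (radialInt (q + 1) · x) (funext fun y => ?_)
    rw [← radialInt_sub (hG a c b) (hG b c a)]
    exact congrArg (radialInt q · y) (funext (hR.divergence_cyclic hsmooth a b c))
  simp only [radialInt_divPotential (fun a b => hG a b _)]
  linear_combination x j * (hc p k i - ha k i p) + x p * hc i k j + x k * hc j p i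
    + x i * (hc k p j - ha p j k)

theorem alt5_riemannPotential (hR : HasRiemannSymmetries R) (i k j p r : Fin D)
    (x : Fin D → ℝ) : alt5 (riemannPotential q R) i k j p r x = 0 := by
  have hcont : ∀ a b c d, Continuous (R a b c d) := fun a b c d => (hsmooth a b c d).continuous
  have hbianchi : ∀ a b c d, radialInt q (R a b c d) x + radialInt q (R a c d b) x
      + radialInt q (R a d b c) x = 0 := by
    intro a b c d
    rw [radialInt_congr_neg (g := fun y => R a c d b y + R a d b c y)
      (fun y => by linear_combination hR.cyclic a b c d y),
      radialInt_add (hcont a c d b) (hcont a d b c)]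
    ring
  set B : (Fin 5 → Fin D) → ℝ := fun w => x (w 1)
    * radialInt q (divPotential q (fun a b => divergence (R a b (w 0))) (w 2) (w 3) (w 4)) x
  have hB : ∀ v, altSum B v = 0 := by
    intro v
    simp only [B, radialInt_divPotential (fun a b =>
      (contDiff_divergence (hsmooth a b _)).continuous)]
    exact altSum_coord_mul_coord x
      (fun a b c => radialInt (q + 1) (radialInt q (divergence (R a b c))) x) v
  change (1 / 120 : ℝ) * altSum (fun w => divPotential q (R (w 0) (w 1)) (w 2) (w 3) (w 4) x
    + B w - B (w ∘ Equiv.swap 0 1)) ![i, k, j, p, r] = 0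
  have hA : altSum (fun w => divPotential q (R (w 0) (w 1)) (w 2) (w 3) (w 4) x) ![i, k, j, p, r]
      = 0 :=
    altSum_coord_mul_bianchi x (fun a b c d => radialInt q (R a b c d) x) hbianchi _
  rw [altSum_sub, altSum_add, altSum_comp_perm, hA, hB]
  ring

theorem eq_divergence_riemannPotential (hq : D = q + 3) (hR : HasRiemannSymmetries R)
    (hdiv : ∀ i j x, ∑ k, ∑ p, pd k (pd p (R i k j p)) x = 0) (i k j p : Fin D)
    (x : Fin D → ℝ) :
    R i k j p x = ∑ r, pd r (fun y => (1 / 2 : ℝ) * riemannPotential q R i k j p r y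
      + (1 / 2 : ℝ) * riemannPotential q R j p i k r y
      - alt5 (riemannPotential q R) i k j p r y) x := by
  have hd : ∀ a b c d r, DifferentiableAt ℝ (riemannPotential q R a b c d r) x :=
    fun a b c d r => (contDiff_riemannPotential hsmooth a b c d r).differentiable (by simp) x
  simp only [alt5_riemannPotential hsmooth hR, sub_zero]
  change _ = divergence (fun r y => (1 / 2 : ℝ) * riemannPotential q R i k j p r y
    + (1 / 2 : ℝ) * riemannPotential q R j p i k r y) x
  rw [divergence_add (fun r => (hd i k j p r).const_mul _) (fun r => (hd j p i k r).const_mul _),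
    divergence_const_mul (hd i k j p), divergence_const_mul (hd j p i k),
    divergence_riemannPotential hsmooth hq hR hdiv, divergence_riemannPotential hsmooth hq hR hdiv]
  linear_combination (1 / 2 : ℝ) * hR.pair_symm i k j p x
    - (1 / 2 : ℝ) * correction_terms_cancel hsmooth hR i k j p x

end Potential

end RiemannPotential

end DivFreeRiemann

/-- Proposition 2, case D ≥ 3, existence: every smooth tensor field R'
with Riemann symmetries and ∂_k∂_p R'^{ikjp} = 0 is of the form
R'^{ikjp} = ∂_r((1/2)ξ^{ikjpr} + (1/2)ξ^{jpikr} − ξ^{[ikjpr]}) with ξ^{ikjpr} = ξ^{[ik][jpr]}. -/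
theorem stmt_4 (D : ℕ) (hD : 3 ≤ D)
    (R' : Fin D → Fin D → Fin D → Fin D → (Fin D → ℝ) → ℝ)
    (hsmooth : ∀ i k j p, ContDiff ℝ (⊤ : ℕ∞) (R' i k j p))
    (hanti1 : ∀ i k j p x, R' i k j p x = - R' k i j p x)
    (hanti2 : ∀ i k j p x, R' i k j p x = - R' i k p j x)
    (hpair : ∀ i k j p x, R' i k j p x = R' j p i k x)
    (hbianchi : ∀ i k j p x,
      (1/6 : ℝ) * (R' i k j p x - R' i j k p x - R' i k p j x
        - R' i p j k x + R' i j p k x + R' i p k j x) = 0)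
    (hdiv : ∀ i j x, ∑ k, ∑ p, pd k (pd p (R' i k j p)) x = 0) :
    ∃ ξ : Fin D → Fin D → Fin D → Fin D → Fin D → (Fin D → ℝ) → ℝ,
      (∀ i k j p r, ContDiff ℝ (⊤ : ℕ∞) (ξ i k j p r)) ∧
      (∀ i k j p r x, ξ i k j p r x = - ξ k i j p r x) ∧
      (∀ i k j p r x, ξ i k j p r x = - ξ i k p j r x) ∧
      (∀ i k j p r x, ξ i k j p r x = - ξ i k j r p x) ∧
      (∀ i k j p x, R' i k j p x
        = ∑ r, pd r (fun y => (1/2 : ℝ) * ξ i k j p r y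
            + (1/2 : ℝ) * ξ j p i k r y - alt5 ξ i k j p r y) x) := by
  obtain ⟨q, hq⟩ : ∃ q : ℕ, D = q + 3 := ⟨D - 3, by omega⟩
  have hR : DivFreeRiemann.HasRiemannSymmetries R' := ⟨hanti1, hanti2, hpair, fun i k j p x => by
    linarith [hbianchi i k j p x, hanti2 i j k p x, hanti2 i k j p x, hanti2 i p k j x]⟩
  exact ⟨DivFreeRiemann.riemannPotential q R', DivFreeRiemann.contDiff_riemannPotential hsmooth,
    hR.riemannPotential_antisymm_left, hR.riemannPotential_antisymm_mid,
    hR.riemannPotential_antisymm_right,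
    DivFreeRiemann.eq_divergence_riemannPotential hsmooth hq hR hdiv⟩
end

section
/- (Gauge invariance of formula (16c)) Let D ≥ 3, set a = 1/(D−2) and b = 1/((D−1)(D−2)). Let R_{ij} be a smooth symmetric tensor field on ℝ^D and ξ_i smooth functions, and set R'_{ij} := R_{ij} + ∂_{(i}ξ_{j)} − (∂_k ξ_k) δ_{ij}. Then R_{ij} and R'_{ij} produce the same tensor field via T_{ij} = a ΔR_{ij} − 2a ∂_k∂_{(i}R_{j)k} + b ∂_i∂_j R + (a ∂_k∂_p R_{kp} − b ΔR) δ_{ij}, where R = δ^{ij}R_{ij}. -/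
/-- Euclidean Laplacian Σ_k ∂_k∂_k. -/
noncomputable def lap {D : ℕ} (f : (Fin D → ℝ) → ℝ) : (Fin D → ℝ) → ℝ :=
  fun x => ∑ k, pd k (pd k f) x

/-- Formula (16c): T_{ij} = a ΔR_{ij} − 2a ∂_k∂_{(i}R_{j)k} + b ∂_i∂_j R
    + (a ∂_k∂_p R_{kp} − b ΔR) δ_{ij}, where R = δ^{ij} R_{ij}. -/
noncomputable def Tform {D : ℕ} (a b : ℝ) (Rt : Fin D → Fin D → (Fin D → ℝ) → ℝ)
    (i j : Fin D) : (Fin D → ℝ) → ℝ :=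
  fun x =>
    a * lap (Rt i j) x
    - 2 * a * ((1/2 : ℝ) * ((∑ k, pd k (pd i (Rt j k)) x) + (∑ k, pd k (pd j (Rt i k)) x)))
    + b * pd i (pd j (fun y => ∑ m, Rt m m y)) x
    + (a * (∑ k, ∑ p, pd k (pd p (Rt k p)) x) - b * lap (fun y => ∑ m, Rt m m y) x)
      * (if i = j then (1 : ℝ) else 0)

/-! The tensor `T` of formula (16c) depends linearly on `R`, so it suffices to compute it on the
pure-gauge term `G_{ij} = ∂_{(i}ξ_{j)} - δ_{ij} ∂_k ξ_k`. Commuting partial derivatives, every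
contribution reduces to `∂_i∂_j S` or `δ_{ij} ΔS` with `S = ∂_k ξ_k`, and the two combine to
`(a - (D-1) b) (∂_i∂_j S - δ_{ij} ΔS)`. The choice `a = 1/(D-2)`, `b = 1/((D-1)(D-2))` is
exactly the one that makes the coefficient vanish. -/

open Finset

section PartialDerivatives

variable {D : ℕ}

lemma contDiff_pd {f : (Fin D → ℝ) → ℝ} (hf : ContDiff ℝ (⊤ : ℕ∞) f) (k : Fin D) :
    ContDiff ℝ (⊤ : ℕ∞) (pd k f) := by
  exact (ContinuousLinearMap.apply ℝ ℝ (Pi.single k (1 : ℝ))).contDiff.comp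
    (contDiff_infty_iff_fderiv.mp hf).2

lemma pd_add {f g : (Fin D → ℝ) → ℝ} (hf : Differentiable ℝ f) (hg : Differentiable ℝ g)
    (k : Fin D) : pd k (fun y => f y + g y) = fun x => pd k f x + pd k g x := by
  funext x
  simp [pd, fderiv_fun_add (hf x) (hg x)]

lemma pd_sub {f g : (Fin D → ℝ) → ℝ} (hf : Differentiable ℝ f) (hg : Differentiable ℝ g)
    (k : Fin D) : pd k (fun y => f y - g y) = fun x => pd k f x - pd k g x := by
  funext x
  simp [pd, fderiv_fun_sub (hf x) (hg x)]

lemma pd_const_mul {f : (Fin D → ℝ) → ℝ} (hf : Differentiable ℝ f) (c : ℝ) (k : Fin D) :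
    pd k (fun y => c * f y) = fun x => c * pd k f x := by
  funext x
  simp [pd, fderiv_const_mul (hf x) c]

lemma pd_half_add_sub_const_mul {f g h : (Fin D → ℝ) → ℝ} (hf : Differentiable ℝ f)
    (hg : Differentiable ℝ g) (hh : Differentiable ℝ h) (c : ℝ) (k : Fin D) :
    pd k (fun y => (1 / 2 : ℝ) * (f y + g y) - c * h y)
      = fun x => (1 / 2 : ℝ) * (pd k f x + pd k g x) - c * pd k h x := by
  have hfg : Differentiable ℝ (fun y => f y + g y) := hf.add hg
  rw [pd_sub (hfg.const_mul _) (hh.const_mul _), pd_const_mul hfg, pd_const_mul hh,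
    pd_add hf hg]

lemma pd_sum {ι : Type*} (s : Finset ι) {F : ι → (Fin D → ℝ) → ℝ}
    (hF : ∀ m ∈ s, Differentiable ℝ (F m)) (k : Fin D) :
    pd k (fun y => ∑ m ∈ s, F m y) = fun x => ∑ m ∈ s, pd k (F m) x := by
  funext x
  simp [pd, fderiv_fun_sum fun m hm => hF m hm x]

lemma pd_comm {f : (Fin D → ℝ) → ℝ} (hf : ContDiff ℝ (⊤ : ℕ∞) f) (a b : Fin D) :
    pd a (pd b f) = pd b (pd a f) := by
  funext x
  have hdf : Differentiable ℝ (fderiv ℝ f) :=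
    (contDiff_infty_iff_fderiv.mp hf).2.differentiable (by simp)
  have hsymm := (hf.contDiffAt (x := x)).isSymmSndFDerivAt
    (by simpa using WithTop.coe_le_coe.mpr (le_top : (2 : ℕ∞) ≤ ⊤))
  change fderiv ℝ (fun y => fderiv ℝ f y (Pi.single b 1)) x (Pi.single a 1)
    = fderiv ℝ (fun y => fderiv ℝ f y (Pi.single a 1)) x (Pi.single b 1)
  simp only [fderiv_clm_apply (hdf x) (differentiableAt_const _)]
  simpa using hsymm (Pi.single a 1) (Pi.single b 1)

lemma pd_pd_add {f g : (Fin D → ℝ) → ℝ} (hf : ContDiff ℝ (⊤ : ℕ∞) f)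
    (hg : ContDiff ℝ (⊤ : ℕ∞) g) (a b : Fin D) :
    pd a (pd b (fun y => f y + g y)) = fun x => pd a (pd b f) x + pd a (pd b g) x := by
  rw [pd_add (hf.differentiable (by simp)) (hg.differentiable (by simp)),
    pd_add ((contDiff_pd hf b).differentiable (by simp))
      ((contDiff_pd hg b).differentiable (by simp))]

lemma pd_pd_const_mul {f : (Fin D → ℝ) → ℝ} (hf : ContDiff ℝ (⊤ : ℕ∞) f) (c : ℝ)
    (a b : Fin D) : pd a (pd b (fun y => c * f y)) = fun x => c * pd a (pd b f) x := by
  rw [pd_const_mul (hf.differentiable (by simp)),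
    pd_const_mul ((contDiff_pd hf b).differentiable (by simp))]

lemma pd_pd_sum {ι : Type*} (s : Finset ι) {F : ι → (Fin D → ℝ) → ℝ}
    (hF : ∀ m ∈ s, ContDiff ℝ (⊤ : ℕ∞) (F m)) (a b : Fin D) :
    pd a (pd b (fun y => ∑ m ∈ s, F m y)) = fun x => ∑ m ∈ s, pd a (pd b (F m)) x := by
  rw [pd_sum s fun m hm => (hF m hm).differentiable (by simp),
    pd_sum s fun m hm => (contDiff_pd (hF m hm) b).differentiable (by simp)]

lemma lap_add {f g : (Fin D → ℝ) → ℝ} (hf : ContDiff ℝ (⊤ : ℕ∞) f)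
    (hg : ContDiff ℝ (⊤ : ℕ∞) g) : lap (fun y => f y + g y) = fun x => lap f x + lap g x := by
  funext x
  simp only [lap, pd_pd_add hf hg, sum_add_distrib]

lemma lap_const_mul {f : (Fin D → ℝ) → ℝ} (hf : ContDiff ℝ (⊤ : ℕ∞) f) (c : ℝ) :
    lap (fun y => c * f y) = fun x => c * lap f x := by
  funext x
  simp only [lap, pd_pd_const_mul hf, mul_sum]

lemma lap_sum {ι : Type*} (s : Finset ι) {F : ι → (Fin D → ℝ) → ℝ}
    (hF : ∀ m ∈ s, ContDiff ℝ (⊤ : ℕ∞) (F m)) :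
    lap (fun y => ∑ m ∈ s, F m y) = fun x => ∑ m ∈ s, lap (F m) x := by
  funext x
  simp only [lap, pd_pd_sum s hF]
  exact sum_comm

lemma pd_lap {f : (Fin D → ℝ) → ℝ} (hf : ContDiff ℝ (⊤ : ℕ∞) f) (i : Fin D) :
    pd i (lap f) = lap (pd i f) := by
  funext x
  change pd i (fun y => ∑ k, pd k (pd k f) y) x = _
  rw [pd_sum _ fun k _ => (contDiff_pd (contDiff_pd hf k) k).differentiable (by simp)]
  refine sum_congr rfl fun k _ => ?_
  rw [pd_comm (contDiff_pd hf k), pd_comm hf i k]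

lemma sum_pd_pd_pd_self_eq_pd_lap {f : (Fin D → ℝ) → ℝ} (hf : ContDiff ℝ (⊤ : ℕ∞) f)
    (i : Fin D) (x : Fin D → ℝ) : ∑ k, pd k (pd i (pd k f)) x = pd i (lap f) x := by
  rw [pd_lap hf]
  exact sum_congr rfl fun k _ => by rw [pd_comm hf i k]

end PartialDerivatives

section Gauge

variable {D : ℕ}

lemma Tform_add {R G : Fin D → Fin D → (Fin D → ℝ) → ℝ}
    (hR : ∀ i j, ContDiff ℝ (⊤ : ℕ∞) (R i j)) (hG : ∀ i j, ContDiff ℝ (⊤ : ℕ∞) (G i j))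
    (a b : ℝ) (i j : Fin D) (x : Fin D → ℝ) :
    Tform a b (fun i j y => R i j y + G i j y) i j x = Tform a b R i j x + Tform a b G i j x := by
  have htrR : ContDiff ℝ (⊤ : ℕ∞) (fun y => ∑ m, R m m y) := .sum fun m _ => hR m m
  have htrG : ContDiff ℝ (⊤ : ℕ∞) (fun y => ∑ m, G m m y) := .sum fun m _ => hG m m
  have hpp : ∀ i j a b, pd a (pd b (fun y => R i j y + G i j y))
      = fun x => pd a (pd b (R i j)) x + pd a (pd b (G i j)) x :=
    fun i j => pd_pd_add (hR i j) (hG i j)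
  simp only [Tform, sum_add_distrib, hpp, lap_add (hR i j) (hG i j), pd_pd_add htrR htrG,
    lap_add htrR htrG]
  ring

noncomputable def divergence (ξ : Fin D → (Fin D → ℝ) → ℝ) : (Fin D → ℝ) → ℝ :=
  fun y => ∑ k, pd k (ξ k) y

noncomputable def gaugeTerm (ξ : Fin D → (Fin D → ℝ) → ℝ) (i j : Fin D) : (Fin D → ℝ) → ℝ :=
  fun y => (1 / 2 : ℝ) * (pd i (ξ j) y + pd j (ξ i) y)
    - (if i = j then (1 : ℝ) else 0) * divergence ξ y

variable {ξ : Fin D → (Fin D → ℝ) → ℝ}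

lemma contDiff_divergence (hξ : ∀ k, ContDiff ℝ (⊤ : ℕ∞) (ξ k)) :
    ContDiff ℝ (⊤ : ℕ∞) (divergence ξ) :=
  .sum fun k _ => contDiff_pd (hξ k) k

lemma contDiff_gaugeTerm (hξ : ∀ k, ContDiff ℝ (⊤ : ℕ∞) (ξ k)) (i j : Fin D) :
    ContDiff ℝ (⊤ : ℕ∞) (gaugeTerm ξ i j) :=
  (contDiff_const.mul ((contDiff_pd (hξ j) i).add (contDiff_pd (hξ i) j))).sub
    (contDiff_const.mul (contDiff_divergence hξ))

lemma pd_pd_gaugeTerm (hξ : ∀ k, ContDiff ℝ (⊤ : ℕ∞) (ξ k)) (a b i j : Fin D) :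
    pd a (pd b (gaugeTerm ξ i j)) = fun x =>
      (1 / 2 : ℝ) * (pd a (pd b (pd i (ξ j))) x + pd a (pd b (pd j (ξ i))) x)
        - (if i = j then (1 : ℝ) else 0) * pd a (pd b (divergence ξ)) x := by
  have hd : ∀ {f : (Fin D → ℝ) → ℝ}, ContDiff ℝ (⊤ : ℕ∞) f → Differentiable ℝ f :=
    fun hf => hf.differentiable (by simp)
  have hξ' := fun k l => contDiff_pd (hξ k) l
  have hS := contDiff_divergence hξ
  unfold gaugeTerm
  rw [pd_half_add_sub_const_mul (hd (hξ' j i)) (hd (hξ' i j)) (hd hS),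
    pd_half_add_sub_const_mul (hd (contDiff_pd (hξ' j i) b)) (hd (contDiff_pd (hξ' i j) b))
      (hd (contDiff_pd hS b))]

lemma sum_pd_pd_pd_eq_pd_pd_divergence (hξ : ∀ k, ContDiff ℝ (⊤ : ℕ∞) (ξ k)) (i j : Fin D)
    (x : Fin D → ℝ) : ∑ k, pd k (pd i (pd j (ξ k))) x = pd i (pd j (divergence ξ)) x := by
  unfold divergence
  rw [pd_pd_sum _ fun k _ => contDiff_pd (hξ k) k]
  refine sum_congr rfl fun k _ => ?_
  rw [pd_comm (contDiff_pd (hξ k) j) k i, pd_comm (hξ k) k j]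

lemma sum_pd_lap_eq_lap_divergence (hξ : ∀ k, ContDiff ℝ (⊤ : ℕ∞) (ξ k)) (x : Fin D → ℝ) :
    ∑ k, pd k (lap (ξ k)) x = lap (divergence ξ) x := by
  unfold divergence
  rw [lap_sum _ fun k _ => contDiff_pd (hξ k) k]
  exact sum_congr rfl fun k _ => by rw [pd_lap (hξ k)]

lemma lap_gaugeTerm (hξ : ∀ k, ContDiff ℝ (⊤ : ℕ∞) (ξ k)) (i j : Fin D) (x : Fin D → ℝ) :
    lap (gaugeTerm ξ i j) x = (1 / 2 : ℝ) * (pd i (lap (ξ j)) x + pd j (lap (ξ i)) x)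
      - (if i = j then (1 : ℝ) else 0) * lap (divergence ξ) x := by
  rw [pd_lap (hξ j), pd_lap (hξ i)]
  simp only [lap, pd_pd_gaugeTerm hξ, sum_sub_distrib, ← mul_sum, sum_add_distrib]

lemma sum_pd_pd_gaugeTerm (hξ : ∀ k, ContDiff ℝ (⊤ : ℕ∞) (ξ k)) (i j : Fin D)
    (x : Fin D → ℝ) : ∑ k, pd k (pd i (gaugeTerm ξ j k)) x
      = (1 / 2 : ℝ) * (pd i (lap (ξ j)) x - pd i (pd j (divergence ξ)) x) := by
  simp only [pd_pd_gaugeTerm hξ, sum_sub_distrib, ← mul_sum, sum_add_distrib,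
    sum_pd_pd_pd_self_eq_pd_lap (hξ j), sum_pd_pd_pd_eq_pd_pd_divergence hξ, ite_mul, one_mul,
    zero_mul, sum_ite_eq, mem_univ, if_true]
  rw [pd_comm (contDiff_divergence hξ) j i]
  ring

lemma trace_gaugeTerm :
    (fun y => ∑ m, gaugeTerm ξ m m y) = fun y => (1 - (D : ℝ)) * divergence ξ y := by
  funext y
  have hdiag : ∀ m, gaugeTerm ξ m m y = pd m (ξ m) y - divergence ξ y := fun m => by
    simp only [gaugeTerm, if_true, one_mul]
    ring
  simp only [hdiag, sum_sub_distrib, sum_const, card_univ, Fintype.card_fin, nsmul_eq_mul]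
  unfold divergence
  ring

lemma sum_sum_pd_pd_gaugeTerm (hξ : ∀ k, ContDiff ℝ (⊤ : ℕ∞) (ξ k)) (x : Fin D → ℝ) :
    ∑ k, ∑ p, pd k (pd p (gaugeTerm ξ k p)) x = 0 := by
  have hrow : ∀ k, ∑ p, pd k (pd p (gaugeTerm ξ k p)) x
      = (1 / 2 : ℝ) * (pd k (lap (ξ k)) x - pd k (pd k (divergence ξ)) x) := fun k => by
    rw [← sum_pd_pd_gaugeTerm hξ k k x]
    exact sum_congr rfl fun p _ => by rw [pd_comm (contDiff_gaugeTerm hξ k p)]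
  rw [sum_congr rfl fun k _ => hrow k, ← mul_sum, sum_sub_distrib,
    sum_pd_lap_eq_lap_divergence hξ, lap, sub_self, mul_zero]

lemma Tform_gaugeTerm (hξ : ∀ k, ContDiff ℝ (⊤ : ℕ∞) (ξ k)) (a b : ℝ) (i j : Fin D)
    (x : Fin D → ℝ) :
    Tform a b (gaugeTerm ξ) i j x = (a - ((D : ℝ) - 1) * b)
      * (pd i (pd j (divergence ξ)) x - lap (divergence ξ) x * (if i = j then (1 : ℝ) else 0)) := by
  simp only [Tform, lap_gaugeTerm hξ, sum_pd_pd_gaugeTerm hξ, trace_gaugeTerm,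
    pd_pd_const_mul (contDiff_divergence hξ), lap_const_mul (contDiff_divergence hξ),
    sum_sum_pd_pd_gaugeTerm hξ]
  rw [pd_comm (contDiff_divergence hξ) j i]
  ring

end Gauge

theorem stmt_9_general (D : ℕ) (hD : 3 ≤ D)
    (Rt : Fin D → Fin D → (Fin D → ℝ) → ℝ)
    (hsmooth : ∀ i j, ContDiff ℝ (⊤ : ℕ∞) (Rt i j))
    (ξ : Fin D → (Fin D → ℝ) → ℝ)
    (hξ : ∀ i, ContDiff ℝ (⊤ : ℕ∞) (ξ i))
    (Rt' : Fin D → Fin D → (Fin D → ℝ) → ℝ)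
    (hRt' : ∀ i j x, Rt' i j x = Rt i j x
      + (1/2 : ℝ) * (pd i (ξ j) x + pd j (ξ i) x)
      - (∑ k, pd k (ξ k) x) * (if i = j then (1 : ℝ) else 0)) :
    ∀ i j x,
      Tform (1 / ((D : ℝ) - 2)) (1 / (((D : ℝ) - 1) * ((D : ℝ) - 2))) Rt' i j x
      = Tform (1 / ((D : ℝ) - 2)) (1 / (((D : ℝ) - 1) * ((D : ℝ) - 2))) Rt i j x := by
  intro i j x
  have hRt'_eq : Rt' = fun i j y => Rt i j y + gaugeTerm ξ i j y := by
    funext i j y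
    rw [hRt', gaugeTerm, divergence]
    ring
  have hD1 : (D : ℝ) - 1 ≠ 0 := by
    have : (3 : ℝ) ≤ D := by exact_mod_cast hD
    linarith
  have hcoeff :
      1 / ((D : ℝ) - 2) - ((D : ℝ) - 1) * (1 / (((D : ℝ) - 1) * ((D : ℝ) - 2))) = 0 := by
    rw [mul_one_div, div_mul_cancel_left₀ hD1, one_div, sub_self]
  rw [hRt'_eq, Tform_add hsmooth (contDiff_gaugeTerm hξ), Tform_gaugeTerm hξ, hcoeff, zero_mul,
    add_zero]

/-- gauge invariance of formula (16c): replacing R_{ij} by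
R_{ij} + ∂_{(i}ξ_{j)} − (∂_k ξ_k) δ_{ij} does not change T_{ij} from formula (16c). -/
theorem stmt_9 (D : ℕ) (hD : 3 ≤ D)
    (Rt : Fin D → Fin D → (Fin D → ℝ) → ℝ)
    (hsmooth : ∀ i j, ContDiff ℝ (⊤ : ℕ∞) (Rt i j))
    (hRsym : ∀ i j x, Rt i j x = Rt j i x)
    (ξ : Fin D → (Fin D → ℝ) → ℝ)
    (hξ : ∀ i, ContDiff ℝ (⊤ : ℕ∞) (ξ i))
    (Rt' : Fin D → Fin D → (Fin D → ℝ) → ℝ)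
    (hRt' : ∀ i j x, Rt' i j x = Rt i j x
      + (1/2 : ℝ) * (pd i (ξ j) x + pd j (ξ i) x)
      - (∑ k, pd k (ξ k) x) * (if i = j then (1 : ℝ) else 0)) :
    ∀ i j x,
      Tform (1 / ((D : ℝ) - 2)) (1 / (((D : ℝ) - 1) * ((D : ℝ) - 2))) Rt' i j x
      = Tform (1 / ((D : ℝ) - 2)) (1 / (((D : ℝ) - 1) * ((D : ℝ) - 2))) Rt i j x :=
  stmt_9_general D hD Rt hsmooth ξ hξ Rt' hRt'
end

section
/- (Proposition 4, case D=2) A smooth symmetric tensor field T^{ij} on ℝ² is transverse-traceless (∂_j T^{ij}=0 and δ_{ij}T^{ij}=0) if and only if there exists a smooth harmonic function R : ℝ² → ℝ (ΔR = 0) such that T^{ij} = ε^{ik} ε^{jp} ∂_k∂_p R (sum over k,p). -/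
/-- Two-dimensional Levi-Civita symbol: ε^{12} = 1 = -ε^{21}, ε^{11} = ε^{22} = 0. -/
def eps2 (i j : Fin 2) : ℝ :=
  if i = 0 ∧ j = 1 then 1 else if i = 1 ∧ j = 0 then -1 else 0

section

variable {D : ℕ}

lemma pd_neg (k : Fin D) (f : (Fin D → ℝ) → ℝ) : pd k (-f) = -pd k f := by
  funext x
  simp [pd, fderiv_neg]

lemma ContDiff.pd {m n : WithTop ℕ∞} {f : (Fin D → ℝ) → ℝ} (hf : ContDiff ℝ n f)
    (hmn : m + 1 ≤ n) (k : Fin D) : ContDiff ℝ m (pd k f) :=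
  (hf.fderiv_right hmn).clm_apply contDiff_const

lemma fderiv_apply_eq_sum_pd (f : (Fin D → ℝ) → ℝ) (x v : Fin D → ℝ) :
    fderiv ℝ f x v = ∑ j, v j * pd j f x := by
  rw [← ContinuousLinearMap.coe_coe, LinearMap.pi_apply_eq_sum_univ]
  refine Finset.sum_congr rfl fun j _ => ?_
  simp only [pd, ContinuousLinearMap.coe_coe, smul_eq_mul]
  congr 2
  ext k
  simp [Pi.single_apply, eq_comm]

lemma pd_pd_comm {f : (Fin D → ℝ) → ℝ} (hf : ContDiff ℝ 2 f) (k p : Fin D) (x : Fin D → ℝ) :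
    pd k (pd p f) x = pd p (pd k f) x := by
  have hdf : Differentiable ℝ (fderiv ℝ f) := (hf.fderiv_right le_rfl).differentiable one_ne_zero
  have hpd : ∀ q r, pd q (pd r f) x = fderiv ℝ (fderiv ℝ f) x (Pi.single q 1) (Pi.single r 1) := by
    intro q r
    rw [pd, show pd r f = fun z => fderiv ℝ f z (Pi.single r 1) from rfl,
      fderiv_clm_apply (hdf x) (differentiableAt_const _)]
    simp
  rw [hpd, hpd, (hf.contDiffAt.isSymmSndFDerivAt (by simp)).eq]

theorem exists_contDiff_pd_eq {f : Fin D → (Fin D → ℝ) → ℝ}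
    (hf : ∀ i, ContDiff ℝ (⊤ : ℕ∞) (f i)) (hcurl : ∀ i j x, pd i (f j) x = pd j (f i) x) :
    ∃ P, ContDiff ℝ (⊤ : ℕ∞) P ∧ ∀ i x, pd i P x = f i x := by
  -- the 1-form `∑ᵢ fᵢ dxᵢ`, closed by `hcurl`
  set ω : (Fin D → ℝ) → (Fin D → ℝ) →L[ℝ] ℝ := fun x => ∑ i, f i x • .proj i
  have hω : ContDiff ℝ (⊤ : ℕ∞) ω := ContDiff.sum fun i _ => (hf i).smul contDiff_const
  have hdω : ∀ a u v, fderiv ℝ ω a u v = ∑ i, ∑ j, u j * pd j (f i) a * v i := by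
    intro a u v
    have hd : HasFDerivAt ω (∑ i, (fderiv ℝ (f i) a).smulRight (.proj i)) a :=
      .fun_sum fun i _ => ((hf i).differentiable (by simp) a).hasFDerivAt.smul_const
        (ContinuousLinearMap.proj (R := ℝ) (φ := fun _ : Fin D => ℝ) i)
    rw [hd.fderiv]
    simp [fderiv_apply_eq_sum_pd, Finset.sum_mul]
  obtain ⟨P, hP⟩ := convex_univ.exists_forall_hasFDerivAt_of_fderiv_symmetric isOpen_univ
    (hω.differentiable (by simp)).differentiableOn fun a _ u v => by
      rw [hdω, hdω, Finset.sum_comm]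
      refine Finset.sum_congr rfl fun i _ => Finset.sum_congr rfl fun j _ => ?_
      rw [hcurl]; ring
  have hfP : fderiv ℝ P = ω := funext fun x => (hP x trivial).fderiv
  refine ⟨P, contDiff_infty_iff_fderiv.2 ⟨fun x => (hP x trivial).differentiableAt, hfP ▸ hω⟩,
    fun i x => ?_⟩
  simp [pd, hfP, ω, Pi.single_apply]

theorem exists_contDiff_pd_pd_eq {H : Fin D → Fin D → (Fin D → ℝ) → ℝ}
    (hH : ∀ i j, ContDiff ℝ (⊤ : ℕ∞) (H i j)) (hsym : ∀ i j x, H i j x = H j i x)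
    (hcurl : ∀ i j k x, pd i (H j k) x = pd j (H i k) x) :
    ∃ R, ContDiff ℝ (⊤ : ℕ∞) R ∧ ∀ i j x, pd i (pd j R) x = H i j x := by
  choose Q hQ hpdQ using fun k =>
    exists_contDiff_pd_eq (fun i => hH i k) fun i j x => hcurl i j k x
  obtain ⟨R, hR, hpdR⟩ := exists_contDiff_pd_eq hQ fun i j x => by rw [hpdQ, hpdQ, hsym]
  refine ⟨R, hR, fun i j x => ?_⟩
  rw [show pd j R = Q j from funext (hpdR j), hpdQ]

end

/-- The matrix ε S εᵀ, with ε = [[0, 1], [-1, 0]] the matrix of `eps2`. -/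
def epsConj {α : Type*} [Neg α] (S : Fin 2 → Fin 2 → α) : Fin 2 → Fin 2 → α :=
  ![![S 1 1, -S 1 0], ![-S 0 1, S 0 0]]

lemma sum_eps2_mul_eps2 (S : Fin 2 → Fin 2 → ℝ) (i j : Fin 2) :
    ∑ k, ∑ p, eps2 i k * eps2 j p * S k p = epsConj S i j := by
  fin_cases i <;> fin_cases j <;> simp [eps2, epsConj]

lemma epsConj_epsConj {α : Type*} [InvolutiveNeg α] (S : Fin 2 → Fin 2 → α) :
    epsConj (epsConj S) = S := by
  ext i j
  fin_cases i <;> fin_cases j <;> simp [epsConj]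

lemma epsConj_apply {X : Type*} (S : Fin 2 → Fin 2 → X → ℝ) (i j : Fin 2) (x : X) :
    epsConj S i j x = epsConj (fun k p => S k p x) i j := by
  fin_cases i <;> fin_cases j <;> rfl

lemma contDiff_epsConj {E : Type*} [NormedAddCommGroup E] [NormedSpace ℝ E] {n : WithTop ℕ∞}
    {S : Fin 2 → Fin 2 → E → ℝ} (hS : ∀ i j, ContDiff ℝ n (S i j)) (i j : Fin 2) :
    ContDiff ℝ n (epsConj S i j) := by
  fin_cases i <;> fin_cases j
  exacts [hS 1 1, (hS 1 0).neg, (hS 0 1).neg, hS 0 0]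

lemma pd_epsConj_comm {T : Fin 2 → Fin 2 → (Fin 2 → ℝ) → ℝ} (hsym : ∀ i j x, T i j x = T j i x)
    (hdiv : ∀ i x, ∑ j, pd j (T i j) x = 0) (i j k : Fin 2) (x : Fin 2 → ℝ) :
    pd i (epsConj T j k) x = pd j (epsConj T i k) x := by
  have hT : T 1 0 = T 0 1 := funext (hsym 1 0)
  have h0 := hdiv 0 x
  have h1 := hdiv 1 x
  simp only [Fin.sum_univ_two, hT] at h0 h1
  fin_cases i <;> fin_cases j <;> fin_cases k <;> simp [epsConj, pd_neg, hT] <;> linarith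

lemma sum_pd_epsConj_pd_pd_eq_zero {R : (Fin 2 → ℝ) → ℝ} (hR : ContDiff ℝ 3 R) (i : Fin 2)
    (x : Fin 2 → ℝ) : ∑ j, pd j (epsConj (fun k p => pd k (pd p R)) i j) x = 0 := by
  have hcomm : pd 0 (pd 1 R) = pd 1 (pd 0 R) := funext (pd_pd_comm (hR.of_le (by norm_num)) 0 1)
  have h2 : ∀ k, ContDiff ℝ 2 (pd k R) := hR.pd le_rfl
  fin_cases i <;> simp [Fin.sum_univ_two, epsConj, pd_neg, hcomm, pd_pd_comm (h2 _) 0 1]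

/-- Proposition 4, case D = 2: a smooth symmetric tensor field on ℝ² is
transverse-traceless iff T^{ij} = ε^{ik} ε^{jp} ∂_k∂_p R for some smooth harmonic R. -/
theorem stmt_10
    (T : Fin 2 → Fin 2 → (Fin 2 → ℝ) → ℝ)
    (hsmooth : ∀ i j, ContDiff ℝ (⊤ : ℕ∞) (T i j))
    (hsym : ∀ i j x, T i j x = T j i x) :
    ((∀ i x, ∑ j, pd j (T i j) x = 0) ∧ (∀ x, ∑ i, T i i x = 0))
    ↔ ∃ R : (Fin 2 → ℝ) → ℝ, ContDiff ℝ (⊤ : ℕ∞) R ∧ (∀ x, lap R x = 0) ∧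
        ∀ i j x, T i j x = ∑ k, ∑ p, eps2 i k * eps2 j p * pd k (pd p R) x := by
  simp only [sum_eps2_mul_eps2 fun k p => pd k (pd p _) _]
  constructor
  · rintro ⟨hdiv, htrace⟩
    obtain ⟨R, hR, hHess⟩ := exists_contDiff_pd_pd_eq (H := epsConj T)
      (contDiff_epsConj hsmooth)
      (fun i j x => by fin_cases i <;> fin_cases j <;> simp [epsConj, hsym 1 0])
      (pd_epsConj_comm hsym hdiv)
    have hHess_eq : ∀ x, (fun k p => pd k (pd p R) x) = epsConj fun k p => T k p x := fun x => by
      ext k p; rw [hHess, epsConj_apply]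
    refine ⟨R, hR, fun x => ?_, fun i j x => by rw [hHess_eq, epsConj_epsConj]⟩
    simpa [lap, Fin.sum_univ_two, hHess, epsConj, add_comm] using htrace x
  · rintro ⟨R, hR, hlap, hT⟩
    obtain rfl : T = epsConj fun k p => pd k (pd p R) := by
      ext i j x; rw [hT, epsConj_apply]
    refine ⟨sum_pd_epsConj_pd_pd_eq_zero (hR.of_le (WithTop.coe_le_coe.2 le_top)), fun x => ?_⟩
    simpa [lap, Fin.sum_univ_two, epsConj, add_comm] using hlap x
end
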